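/- Let κ be an ordinal such that for every ordinal λ < κ, every ⊆*-decreasing transfinite sequence (A_α)_{α<λ} of infinite subsets of ℕ has an infinite pseudo-intersection, i.e., an infinite A ⊆ ℕ with A ⊆* A_α for all α < λ (this holds whenever κ ≤ 𝔱, the tower number). Let X be a topological space having a sequence (Kₙ)_{n∈ℕ} of subsets with no subsequence converging in the sense of Kuratowski. Then X contains a right-separated transfinite sequence of length κ: points (p_α)_{α<κ} such that for every α < κ, p_α does not belong to the closure of {p_β : α < β < κ}. -/

import Mathlib

/-!
Build points `p α`, open sets `U α ∋ p α` and infinite sets `A α ⊆ ℕ` by transfinite recursion,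
with `A α` `⊆*`-decreasing and `U α` disjoint from `K n` for all `n ∈ A α`. At stage `α < κ` the
earlier `A β` have an infinite pseudo-intersection `B`; since `K` restricted to `B` does not converge,
some `p ∈ Ls B \ Li B` has an open neighbourhood `U` missing `K n` for infinitely many `n ∈ B`, and
these `n` form `A α`. For `α < β`, every neighbourhood of `p β` meets `K n` for infinitely many
`n ∈ B_β ⊆* A α`, so `p β ∉ U α`: the open set `U α` separates `p α` from all later points.
-/

open Set Topology

/-- Lower closed limit (Kuratowski) of the subsequence of `K` indexed by the
infinite set `A ⊆ ℕ`, with respect to the topology `t`: points all of whose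
open neighborhoods meet `K n` for all but finitely many `n ∈ A`. -/
def kurLi {X : Type*} (t : TopologicalSpace X) (K : ℕ → Set X) (A : Set ℕ) : Set X :=
  {x | ∀ U : Set X, IsOpen[t] U → x ∈ U → {n ∈ A | U ∩ K n = ∅}.Finite}

/-- Upper closed limit (Kuratowski): points all of whose open neighborhoods
meet `K n` for infinitely many `n ∈ A`. -/
def kurLs {X : Type*} (t : TopologicalSpace X) (K : ℕ → Set X) (A : Set ℕ) : Set X :=
  {x | ∀ U : Set X, IsOpen[t] U → x ∈ U → {n ∈ A | (U ∩ K n).Nonempty}.Infinite}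

/-- A family of subsets of `ℕ` is splitting if every infinite `A ⊆ ℕ` is split
by some member of the family. -/
def IsSplittingFamily (S : Set (Set ℕ)) : Prop :=
  ∀ A : Set ℕ, A.Infinite → ∃ s ∈ S, (A ∩ s).Infinite ∧ (A \ s).Infinite

def HasTowerPseudoIntersections (lam : Ordinal) : Prop :=
  ∀ A : {o : Ordinal // o < lam} → Set ℕ, (∀ i, (A i).Infinite) →
    (∀ i j : {o : Ordinal // o < lam}, (i : Ordinal) ≤ j → (A j \ A i).Finite) →
    ∃ B : Set ℕ, B.Infinite ∧ ∀ i, (B \ A i).Finite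

theorem Ordinal.exists_forall_lt_of_forall_exists {T : Type*} [Nonempty T] (κ : Ordinal)
    (P : (α : Ordinal) → (∀ β < α, T) → T → Prop)
    (step : ∀ α < κ, ∀ g : ∀ β < α, T,
      (∀ β (h : β < α), P β (fun γ hγ => g γ (hγ.trans h)) (g β h)) → ∃ d, P α g d) :
    ∃ f : Ordinal → T, ∀ α < κ, P α (fun β _ => f β) (f α) := by
  let f : Ordinal → T := Ordinal.lt_wf.fix fun α g => Classical.epsilon (P α g)
  have hf : ∀ α, f α = Classical.epsilon (P α fun β _ => f β) := Ordinal.lt_wf.fix_eq _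
  refine ⟨f, fun α => ?_⟩
  induction α using WellFoundedLT.induction with
  | ind α ih =>
    intro hα
    rw [hf α]
    exact Classical.epsilon_spec (step α hα _ fun β hβ => ih β hβ (hβ.trans hα))

section Kuratowski

variable {X : Type*} [t : TopologicalSpace X] {K : ℕ → Set X}

theorem kurLi_subset_kurLs {A : Set ℕ} (hA : A.Infinite) : kurLi t K A ⊆ kurLs t K A := by
  intro x hx U hU hxU hfin
  refine hA (((hx U hU hxU).union hfin).subset fun n hn => ?_)
  rcases (U ∩ K n).eq_empty_or_nonempty with h | h
  · exact Or.inl ⟨hn, h⟩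
  · exact Or.inr ⟨hn, h⟩

theorem disjoint_kurLs_of_diff_finite {A B : Set ℕ} {U : Set X} (hU : IsOpen U)
    (hUA : ∀ n ∈ A, U ∩ K n = ∅) (hBA : (B \ A).Finite) : Disjoint (kurLs t K B) U := by
  refine Set.disjoint_left.2 fun x hx hxU => hx U hU hxU (hBA.subset ?_)
  rintro n ⟨hnB, hne⟩
  exact ⟨hnB, fun hnA => hne.ne_empty (hUA n hnA)⟩

variable (K) in
/-- `B` is a pseudo-intersection of the earlier index sets, from which `idx` is carved out. -/
def IsKurStage {α : Ordinal} (g : ∀ β < α, X × Set X × Set ℕ) (d : X × Set X × Set ℕ) : Prop :=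
  let (pt, nbhd, idx) := d
  idx.Infinite ∧ IsOpen nbhd ∧ pt ∈ nbhd ∧ (∀ n ∈ idx, nbhd ∩ K n = ∅) ∧
    ∃ B : Set ℕ, pt ∈ kurLs t K B ∧ idx ⊆ B ∧ ∀ β (h : β < α), (B \ (g β h).2.2).Finite

theorem exists_isKurStage (hK : ∀ A : Set ℕ, A.Infinite → kurLi t K A ≠ kurLs t K A)
    {α : Ordinal} (hα : HasTowerPseudoIntersections α) (g : ∀ β < α, X × Set X × Set ℕ)
    (hg : ∀ β (h : β < α), IsKurStage K (fun γ hγ => g γ (hγ.trans h)) (g β h)) :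
    ∃ d, IsKurStage K g d := by
  have hdecr : ∀ i j : {o : Ordinal // o < α}, i.1 ≤ j.1 →
      ((g j.1 j.2).2.2 \ (g i.1 i.2).2.2).Finite := fun i j hij => by
    rcases hij.eq_or_lt with h | h
    · simp [Subtype.ext h]
    · obtain ⟨-, -, -, -, B', -, hB', hB'g⟩ := hg j.1 j.2
      exact (hB'g i.1 h).subset (sdiff_subset_sdiff_left hB')
  obtain ⟨B, hB, hBg⟩ := hα (fun i => (g i.1 i.2).2.2) (fun i => (hg i.1 i.2).1) hdecr
  obtain ⟨x, hxLs, hxLi⟩ := exists_of_ssubset ((kurLi_subset_kurLs hB).ssubset_of_ne (hK B hB))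
  simp only [kurLi, mem_ofPred_eq, not_forall, exists_prop] at hxLi
  obtain ⟨U, hU, hxU, hUB⟩ := hxLi
  exact ⟨(x, U, {n ∈ B | U ∩ K n = ∅}), hUB, hU, hxU, fun n hn => hn.2, B, hxLs,
    fun n hn => hn.1, fun β hβ => hBg ⟨β, hβ⟩⟩

end Kuratowski

/-- If `κ` is an ordinal below which every `⊆*`-decreasing transfinite sequence
of infinite subsets of `ℕ` has an infinite pseudo-intersection (e.g. `κ ≤ 𝔱`),
and `X` has a sequence of subsets with no Kuratowski-convergent subsequence,
then `X` contains a right-separated transfinite sequence of length `κ`. -/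
theorem stmt12 {X : Type*} [t : TopologicalSpace X] (κ : Ordinal)
    (hκ : ∀ lam : Ordinal, lam < κ →
      ∀ A : {o : Ordinal // o < lam} → Set ℕ,
        (∀ i, (A i).Infinite) →
        (∀ i j : {o : Ordinal // o < lam}, (i : Ordinal) ≤ (j : Ordinal) →
          (A j \ A i).Finite) →
        ∃ B : Set ℕ, B.Infinite ∧ ∀ i, (B \ A i).Finite)
    (K : ℕ → Set X)
    (hK : ∀ A : Set ℕ, A.Infinite → kurLi t K A ≠ kurLs t K A) :
    ∃ p : {o : Ordinal // o < κ} → X,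
      ∀ i : {o : Ordinal // o < κ},
        p i ∉ closure {x : X | ∃ j : {o : Ordinal // o < κ},
          (i : Ordinal) < (j : Ordinal) ∧ x = p j} := by
  have : Nonempty X := by
    by_contra hX
    rw [not_nonempty_iff] at hX
    exact hK univ infinite_univ ((eq_empty_of_isEmpty _).trans (eq_empty_of_isEmpty _).symm)
  obtain ⟨f, hf⟩ := Ordinal.exists_forall_lt_of_forall_exists κ (fun _ => IsKurStage K)
    fun α hα => exists_isKurStage hK (hκ α hα)
  refine ⟨fun i => (f i).1, fun i => ?_⟩
  obtain ⟨-, hU, hpU, hUK, -⟩ := hf i.1 i.2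
  have hlater : Disjoint {x | ∃ j : {o : Ordinal // o < κ}, i.1 < j.1 ∧ x = (f j).1} (f i).2.1 := by
    refine Set.disjoint_left.2 ?_
    rintro _ ⟨j, hij, rfl⟩
    obtain ⟨-, -, -, -, B, hpB, -, hBf⟩ := hf j.1 j.2
    exact Set.disjoint_left.1 (disjoint_kurLs_of_diff_finite hU hUK (hBf i.1 hij)) hpB
  exact fun hcl => Set.disjoint_left.1 (hlater.closure_left hU) hcl hpU
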